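/- For all integers m ≥ 3 and n ≥ 2, the locating chromatic number of K_m □ P_n satisfies χ_L(K_m □ P_n) ≤ m + 2. -/

import Mathlib

/-! The two ends `(0, 0)` and `(0, n - 1)` of the path `{0} × P_n` get private
colours `m` and `m + 1`; every other vertex `(a, b)` gets colour `a + b mod m`. For `m ≥ 2` this is
proper, and within a column `b` the colour determines `a`. Distances in `K_m □ P_n` are
`[a ≠ a'] + |b - b'|`, so the distances to the two private vertices are `[a ≠ 0] + b` and
`[a ≠ 0] + (n - 1 - b)`; they determine `b`, and then the colour determines `a`. -/

open SimpleGraph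

/-- The distance from a vertex to a set of vertices. -/
noncomputable def setDist {V : Type*} (G : SimpleGraph V) (v : V) (S : Set V) : ℕ :=
  sInf (G.dist v '' S)

/-- The color code of a vertex with respect to a `k`-coloring `c`:
the tuple of distances to the color classes. -/
noncomputable def colorCode {V : Type*} (G : SimpleGraph V) {k : ℕ} (c : V → Fin k)
    (v : V) : Fin k → ℕ :=
  fun i => setDist G v (c ⁻¹' {i})

/-- `c` is a locating `k`-coloring of `G`: a proper coloring onto the `k` colors
such that distinct vertices have distinct color codes. -/
def IsLocatingColoring {V : Type*} (G : SimpleGraph V) {k : ℕ} (c : V → Fin k) : Prop :=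
  Function.Surjective c ∧
  (∀ u v : V, G.Adj u v → c u ≠ c v) ∧
  Function.Injective (colorCode G c)

/-- The locating chromatic number: the least `k` admitting a locating `k`-coloring. -/
noncomputable def locatingChromaticNumber {V : Type*} (G : SimpleGraph V) : ℕ :=
  sInf {k : ℕ | ∃ c : V → Fin k, IsLocatingColoring G c}

/-- A vertex is colorful w.r.t. a coloring `c` if every color appears in its
closed neighborhood. -/
def IsColorful {V : Type*} (G : SimpleGraph V) {k : ℕ} (c : V → Fin k) (v : V) : Prop :=
  ∀ i : Fin k, ∃ u : V, (u = v ∨ G.Adj v u) ∧ c u = i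

namespace SimpleGraph

variable {α β : Type*}

theorem dist_boxProd {G : SimpleGraph α} {H : SimpleGraph β} {x y : α × β}
    (hG : G.Reachable x.1 y.1) (hH : H.Reachable x.2 y.2) :
    (G □ H).dist x y = G.dist x.1 y.1 + H.dist x.2 y.2 := by
  have hGH : (G □ H).Reachable x y := reachable_boxProd.2 ⟨hG, hH⟩
  have h := edist_boxProd (G := G) (H := H) x y
  rw [← hGH.coe_dist_eq_edist, ← hG.coe_dist_eq_edist, ← hH.coe_dist_eq_edist] at h
  exact_mod_cast h

theorem pathGraph_dist {n : ℕ} (u v : Fin n) : (pathGraph n).dist u v = Nat.dist u v := by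
  have exists_walk : ∀ k (u v : Fin n), u + k = (v : ℕ) →
      ∃ w : (pathGraph n).Walk u v, w.length = k := by
    intro k
    induction k with
    | zero => intro u v h; obtain rfl : u = v := Fin.ext h; exact ⟨.nil, rfl⟩
    | succ k ih =>
      intro u v h
      obtain ⟨w, hw⟩ := ih ⟨u + 1, by omega⟩ v (by simp only; omega)
      exact ⟨.cons (pathGraph_adj.2 (Or.inl rfl)) w, by simp [hw]⟩
  have length_ge : ∀ {u v : Fin n} (w : (pathGraph n).Walk u v), Nat.dist u v ≤ w.length := by
    intro u v w
    induction w with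
    | nil => simp
    | cons h w ih =>
      rw [pathGraph_adj] at h
      simp only [Walk.length_cons, Nat.dist] at ih ⊢
      omega
  refine le_antisymm ?_ ?_
  · rcases le_total (u : ℕ) v with huv | hvu
    · obtain ⟨w, hw⟩ := exists_walk (v - u) u v (by omega)
      exact (dist_le w).trans (by rw [hw, Nat.dist_eq_sub_of_le huv])
    · obtain ⟨w, hw⟩ := exists_walk (u - v) v u (by omega)
      rw [dist_comm]
      exact (dist_le w).trans (by rw [hw, Nat.dist_comm, Nat.dist_eq_sub_of_le hvu])
  · obtain ⟨w, hw⟩ := (pathGraph_preconnected n u v).exists_walk_length_eq_dist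
    exact hw ▸ length_ge w

end SimpleGraph

section LocatingColoring

variable {V : Type*} {G : SimpleGraph V}

theorem setDist_singleton (v t : V) : setDist G v {t} = G.dist v t := by
  simp [setDist]

theorem SimpleGraph.Connected.setDist_eq_zero_iff (hG : G.Connected) {S : Set V}
    (hS : S.Nonempty) {v : V} : setDist G v S = 0 ↔ v ∈ S := by
  rw [setDist, Nat.sInf_eq_zero, or_iff_left (hS.image _).ne_empty]
  constructor
  · rintro ⟨x, hx, hvx⟩
    rwa [hG.dist_eq_zero_iff.1 hvx]
  · exact fun hv => ⟨v, hv, dist_self⟩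

variable {k : ℕ} {c : V → Fin k}

theorem colorCode_apply_of_preimage_eq_singleton {i : Fin k} {t : V} (h : c ⁻¹' {i} = {t})
    (v : V) : colorCode G c v i = G.dist v t := by
  rw [colorCode, h, setDist_singleton]

theorem SimpleGraph.Connected.color_eq_of_colorCode_eq (hG : G.Connected) {u v : V}
    (h : colorCode G c u = colorCode G c v) : c u = c v := by
  have hS : (c ⁻¹' {c u}).Nonempty := ⟨u, rfl⟩
  have hu : colorCode G c u (c u) = 0 := (hG.setDist_eq_zero_iff hS).2 rfl
  rw [h] at hu
  exact ((hG.setDist_eq_zero_iff hS).1 hu).symm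

theorem locatingChromaticNumber_le (hc : IsLocatingColoring G c) :
    locatingChromaticNumber G ≤ k :=
  Nat.sInf_le ⟨c, hc⟩

end LocatingColoring

section CompleteBoxPath

variable {m n : ℕ}

theorem dist_top_boxProd_pathGraph (p q : Fin m × Fin n) :
    ((⊤ : SimpleGraph (Fin m)) □ pathGraph n).dist p q =
      (if p.1 = q.1 then 0 else 1) + Nat.dist p.2 q.2 := by
  rw [dist_boxProd (preconnected_top _ _) (pathGraph_preconnected n _ _), dist_top,
    pathGraph_dist]

theorem connected_top_boxProd_pathGraph (hm : 0 < m) (hn : 0 < n) :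
    ((⊤ : SimpleGraph (Fin m)) □ pathGraph n).Connected := by
  have : Nonempty (Fin m) := ⟨⟨0, hm⟩⟩
  obtain ⟨n, rfl⟩ := Nat.exists_eq_add_of_lt hn
  exact connected_top.boxProd (pathGraph_connected _)

def boxPathColoring (m n : ℕ) (p : Fin m × Fin n) : Fin (m + 2) :=
  if (p.1 : ℕ) = 0 ∧ (p.2 : ℕ) = 0 then Fin.natAdd m 0
  else if (p.1 : ℕ) = 0 ∧ (p.2 : ℕ) = n - 1 then Fin.natAdd m 1
  else Fin.castAdd 2 ⟨(p.1 + p.2) % m, Nat.mod_lt _ p.1.pos⟩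

theorem boxPathColoring_val_cases (a : Fin m) (b : Fin n) :
    ((a : ℕ) = 0 ∧ (b : ℕ) = 0 ∧ (boxPathColoring m n (a, b) : ℕ) = m) ∨
    ((a : ℕ) = 0 ∧ (b : ℕ) ≠ 0 ∧ (b : ℕ) = n - 1 ∧ (boxPathColoring m n (a, b) : ℕ) = m + 1) ∨
    (¬((a : ℕ) = 0 ∧ ((b : ℕ) = 0 ∨ (b : ℕ) = n - 1)) ∧
      (boxPathColoring m n (a, b) : ℕ) = (a + b) % m) := by
  unfold boxPathColoring
  split_ifs with h₀ h₁
  · exact Or.inl ⟨h₀.1, h₀.2, rfl⟩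
  · exact Or.inr (Or.inl ⟨h₁.1, fun hb => h₀ ⟨h₁.1, hb⟩, h₁.2, rfl⟩)
  · exact Or.inr (Or.inr ⟨by tauto, rfl⟩)

theorem boxPathColoring_preimage_natAdd_zero (hm : 0 < m) (hn : 0 < n) :
    boxPathColoring m n ⁻¹' {Fin.natAdd m 0} = {(⟨0, hm⟩, ⟨0, hn⟩)} := by
  ext ⟨a, b⟩
  simp only [Set.mem_preimage, Set.mem_singleton_iff, Fin.ext_iff, Prod.ext_iff, Fin.val_natAdd]
  have := Nat.mod_lt (a + b) hm
  rcases boxPathColoring_val_cases a b with h | h | h <;> omega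

theorem boxPathColoring_preimage_natAdd_one (hm : 0 < m) (hn : 2 ≤ n) :
    boxPathColoring m n ⁻¹' {Fin.natAdd m 1} = {(⟨0, hm⟩, ⟨n - 1, by omega⟩)} := by
  ext ⟨a, b⟩
  simp only [Set.mem_preimage, Set.mem_singleton_iff, Fin.ext_iff, Prod.ext_iff, Fin.val_natAdd]
  have := Nat.mod_lt (a + b) hm
  rcases boxPathColoring_val_cases a b with h | h | h <;> omega

theorem boxPathColoring_left_injective (b : Fin n) :
    Function.Injective fun a : Fin m => boxPathColoring m n (a, b) := by
  intro a a' h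
  replace h : (boxPathColoring m n (a, b) : ℕ) = boxPathColoring m n (a', b) := congrArg Fin.val h
  have := Nat.mod_lt (a + b) a.pos
  have := Nat.mod_lt (a' + b) a.pos
  rcases boxPathColoring_val_cases a b with ha | ha | ha <;>
    rcases boxPathColoring_val_cases a' b with ha' | ha' | ha'
  all_goals first
    | exact Fin.ext (by omega)
    | exact Fin.ext <| Nat.ModEq.eq_of_lt_of_lt (Nat.ModEq.add_right_cancel' (b : ℕ)
        (show ((a : ℕ) + b) % m = (a' + b) % m by omega)) a.2 a'.2

theorem boxPathColoring_adj_ne (hm : 2 ≤ m) {p q : Fin m × Fin n}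
    (h : ((⊤ : SimpleGraph (Fin m)) □ pathGraph n).Adj p q) :
    boxPathColoring m n p ≠ boxPathColoring m n q := by
  obtain ⟨a, b⟩ := p
  obtain ⟨a', b'⟩ := q
  rw [boxProd_adj] at h
  rcases h with ⟨ha, rfl⟩ | ⟨hb, rfl⟩
  · exact (boxPathColoring_left_injective b).ne ((top_adj a a').1 ha)
  · dsimp only at hb ⊢
    intro h
    replace h : (boxPathColoring m n (a, b) : ℕ) = boxPathColoring m n (a, b') := congrArg Fin.val h
    have mod_succ_ne (x : ℕ) : x % m ≠ (x + 1) % m := fun hx => by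
      have := Nat.ModEq.add_left_cancel' x (show x + 0 ≡ x + 1 [MOD m] from hx)
      rw [Nat.ModEq, Nat.zero_mod, Nat.mod_eq_of_lt hm] at this
      omega
    have key : ((a : ℕ) + b) % m ≠ (a + b') % m := by
      rcases pathGraph_adj.1 hb with hb | hb
      · rw [← hb, ← add_assoc]; exact mod_succ_ne _
      · rw [← hb, ← add_assoc]; exact (mod_succ_ne _).symm
    have := Nat.mod_lt (a + b) a.pos
    have := Nat.mod_lt (a + b') a.pos
    have := pathGraph_adj.1 hb
    rcases boxPathColoring_val_cases a b with hc | hc | hc <;>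
      rcases boxPathColoring_val_cases a b' with hc' | hc' | hc' <;> omega

theorem boxPathColoring_surjective (hm : 2 ≤ m) (hn : 2 ≤ n) :
    Function.Surjective (boxPathColoring m n) := by
  intro k
  suffices ∃ p, (boxPathColoring m n p : ℕ) = k from this.imp fun _ => Fin.ext
  obtain hk | hk | hk | hk :
      (k : ℕ) = 0 ∨ (0 < (k : ℕ) ∧ (k : ℕ) < m) ∨ k = m ∨ k = m + 1 := by
    omega
  · refine ⟨(⟨m - 1, by omega⟩, ⟨1, by omega⟩), ?_⟩
    have : (m - 1 + 1) % m = 0 := by rw [Nat.sub_add_cancel (by omega), Nat.mod_self]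
    rcases boxPathColoring_val_cases (m := m) (n := n) ⟨m - 1, by omega⟩ ⟨1, by omega⟩
      with h | h | h <;> simp only at h <;> omega
  · refine ⟨(⟨k, hk.2⟩, ⟨0, by omega⟩), ?_⟩
    have : (k + 0) % m = k := Nat.mod_eq_of_lt hk.2
    rcases boxPathColoring_val_cases (m := m) (n := n) ⟨k, hk.2⟩ ⟨0, by omega⟩ with h | h | h <;>
      simp only at h <;> omega
  · exact ⟨_, congrArg Fin.val
      ((boxPathColoring_preimage_natAdd_zero (by omega) (by omega)).ge rfl) |>.trans hk.symm⟩
  · exact ⟨_, congrArg Fin.val ((boxPathColoring_preimage_natAdd_one (by omega) hn).ge rfl)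
      |>.trans hk.symm⟩

theorem colorCode_boxPathColoring_injective (hm : 0 < m) (hn : 2 ≤ n) :
    Function.Injective
      (colorCode ((⊤ : SimpleGraph (Fin m)) □ pathGraph n) (boxPathColoring m n)) := by
  rintro ⟨a, b⟩ ⟨a', b'⟩ h
  have hn₀ : 0 < n := by omega
  have hc := (connected_top_boxProd_pathGraph hm hn₀).color_eq_of_colorCode_eq h
  have h₀ := congrFun h (Fin.natAdd m 0)
  have h₁ := congrFun h (Fin.natAdd m 1)
  simp only [
    colorCode_apply_of_preimage_eq_singleton (boxPathColoring_preimage_natAdd_zero hm hn₀),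
    colorCode_apply_of_preimage_eq_singleton (boxPathColoring_preimage_natAdd_one hm hn),
    dist_top_boxProd_pathGraph, Fin.ext_iff, Nat.dist] at h₀ h₁
  obtain rfl : b = b' := Fin.ext (by split_ifs at h₀ h₁ <;> omega)
  rw [boxPathColoring_left_injective b hc]

theorem isLocatingColoring_boxPathColoring (hm : 2 ≤ m) (hn : 2 ≤ n) :
    IsLocatingColoring ((⊤ : SimpleGraph (Fin m)) □ pathGraph n) (boxPathColoring m n) :=
  ⟨boxPathColoring_surjective hm hn, fun _ _ => boxPathColoring_adj_ne hm,
    colorCode_boxPathColoring_injective (by omega) hn⟩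

end CompleteBoxPath

/-- For `m ≥ 3` and `n ≥ 2`, `χ_L(K_m □ P_n) ≤ m + 2`. -/
theorem stmt8 (m n : ℕ) (hm : 3 ≤ m) (hn : 2 ≤ n) :
    locatingChromaticNumber ((⊤ : SimpleGraph (Fin m)) □ pathGraph n) ≤ m + 2 :=
  locatingChromaticNumber_le (isLocatingColoring_boxPathColoring (by omega) hn)
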